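/- arXiv:2309.15406 — 5 statements merged into one kernel-verified Lean document; each statement's English description precedes it below -/
import Mathlib

section
/- Let N > 1, α with gcd(2α, N) = 1, and let c be an integer with c^{2α} ≡ (1+N)^{2α·m} (mod N²) for some 0 ≤ m < N. Let sk₁, sk₂ be integers with sk₁ + sk₂ = (2α)·((2α)⁻¹ mod N) + η·2α·N for some η ≥ 0. Define M₁ = c^{sk₁} mod N², M₂ = c^{sk₂} mod N². Then ((M₁·M₂ mod N²) − 1)/N mod N = m, i.e., threshold decryption recovers the plaintext. -/
/-!
Since `(1 + N)^K ≡ 1 + K N (mod N²)`, the element `1 + N` has order `N` modulo `N²` and encodes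
exponents modulo `N`. Combining the shares gives `c^(sk₁ + sk₂) = (c^(2α))^(b + ηN)
≡ (1 + N)^(2α m (b + ηN))`, and `2α b ≡ 1 (mod N)` reduces that exponent to `m` modulo `N`.
So `M₁ M₂ mod N² = 1 + m N`, from which `L` reads off `m`.
-/

theorem Int.one_add_pow_modEq (N : ℤ) (K : ℕ) : (1 + N) ^ K ≡ 1 + K * N [ZMOD N ^ 2] := by
  refine (Int.modEq_iff_dvd.mpr ?_).symm
  simpa [add_comm, sub_sub, mul_comm] using sq_dvd_add_pow_sub_sub N 1 K

theorem Int.one_add_pow_modEq_of_modEq {N K m : ℕ} (hK : K ≡ m [MOD N]) :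
    (1 + (N : ℤ)) ^ K ≡ 1 + m * N [ZMOD N ^ 2] := by
  refine (Int.one_add_pow_modEq N K).trans (Int.ModEq.add_left 1 ?_)
  rw [sq]
  exact (Int.natCast_modEq_iff.mpr hK).mul_right'

def paillierL (N x : ℤ) : ℤ := (x - 1) / N

theorem paillierL_emod_sq_of_modEq {N m x : ℤ} (hN : 1 < N) (hm₀ : 0 ≤ m) (hmN : m < N)
    (hx : x ≡ 1 + m * N [ZMOD N ^ 2]) : paillierL N (x % N ^ 2) % N = m := by
  have hlt : 1 + m * N < N ^ 2 := by nlinarith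
  rw [paillierL, hx.eq, Int.emod_eq_of_lt (by positivity) hlt, add_sub_cancel_left,
    Int.mul_ediv_cancel _ (by positivity), Int.emod_eq_of_lt hm₀ hmN]

theorem fastPaiTD_TDec_correct_general (N α m b sk₁ sk₂ η : ℕ) (c : ℤ)
    (hN : 1 < N)
    (hm : m < N)
    (hc : c ^ (2 * α) ≡ (1 + (N : ℤ)) ^ (2 * α * m) [ZMOD (N : ℤ) ^ 2])
    (hb : (2 * α * b) % N = 1 % N)
    (hsk : sk₁ + sk₂ = 2 * α * b + η * (2 * α * N)) :
    ((((c ^ sk₁ % (N : ℤ) ^ 2) * (c ^ sk₂ % (N : ℤ) ^ 2)) % (N : ℤ) ^ 2 - 1)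
        / (N : ℤ)) % (N : ℤ) = (m : ℤ) := by
  have hexp : 2 * α * m * (b + η * N) ≡ m [MOD N] :=
    calc 2 * α * m * (b + η * N) = 2 * α * b * m + 2 * α * m * η * N := by ring
      _ ≡ 1 * m + 0 [MOD N] :=
        (Nat.ModEq.mul_right m hb).add (Nat.modEq_zero_iff_dvd.mpr (dvd_mul_left _ _))
      _ = m := by ring
  have hsum : c ^ (sk₁ + sk₂) ≡ 1 + m * N [ZMOD N ^ 2] :=
    calc c ^ (sk₁ + sk₂) = (c ^ (2 * α)) ^ (b + η * N) := by rw [hsk, ← pow_mul]; ring_nf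
      _ ≡ ((1 + N) ^ (2 * α * m)) ^ (b + η * N) [ZMOD N ^ 2] := hc.pow _
      _ = (1 + N) ^ (2 * α * m * (b + η * N)) := (pow_mul _ _ _).symm
      _ ≡ 1 + m * N [ZMOD N ^ 2] := Int.one_add_pow_modEq_of_modEq hexp
  rw [← Int.mul_emod, ← pow_add]
  exact paillierL_emod_sq_of_modEq (by exact_mod_cast hN) (by positivity)
    (by exact_mod_cast hm) hsum

/-- Correctness of FastPaiTD threshold decryption: with `M₁ = c^{sk₁} mod N²`,
`M₂ = c^{sk₂} mod N²`, `sk₁ + sk₂ = (2α)·((2α)⁻¹ mod N) + η·2αN`,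
threshold decryption `((M₁·M₂ mod N²) − 1)/N mod N` recovers `m`. -/
theorem fastPaiTD_TDec_correct (N α m b sk₁ sk₂ η : ℕ) (c : ℤ)
    (hN : 1 < N) (hα : 0 < α) (hgcd : Nat.gcd (2 * α) N = 1)
    (hm : m < N)
    (hc : c ^ (2 * α) ≡ (1 + (N : ℤ)) ^ (2 * α * m) [ZMOD (N : ℤ) ^ 2])
    (hbN : b < N) (hb : (2 * α * b) % N = 1 % N)
    (hsk : sk₁ + sk₂ = 2 * α * b + η * (2 * α * N)) :
    ((((c ^ sk₁ % (N : ℤ) ^ 2) * (c ^ sk₂ % (N : ℤ) ^ 2)) % (N : ℤ) ^ 2 - 1)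
        / (N : ℤ)) % (N : ℤ) = (m : ℤ) :=
  fastPaiTD_TDec_correct_general N α m b sk₁ sk₂ η c hN hm hc hb hsk
end

section
/- Let l, σ, N, x, y, r₁, r₂ be as follows: N > 2^{σ+l+3}, x, y ∈ [−2^l, 2^l] integers, r₁ ∈ [1, 2^σ), r₂ ≤ N/2, r₁ + r₂ > N/2. Then r₁·(x − y + 1) + r₂ > N/2 if and only if x ≥ y. -/
theorem Int.lt_mul_add_iff_pos {t a b k : ℤ} (ha : 0 ≤ a) (hb : b ≤ t) (hab : t < a + b) :
    t < a * k + b ↔ 0 < k := by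
  constructor
  · intro h
    by_contra! hk
    have : a * k ≤ 0 := mul_nonpos_of_nonneg_of_nonpos ha hk
    linarith
  · intro hk
    have : a ≤ a * k := le_mul_of_one_le_right ha (by omega)
    linarith

theorem scmp_test_pi0_general (N x y r₁ r₂ : ℤ)
    (hr₁ : 1 ≤ r₁)
    (hr₂' : r₂ ≤ N / 2) (hsum : N / 2 < r₁ + r₂) :
    N / 2 < r₁ * (x - y + 1) + r₂ ↔ y ≤ x := by
  rw [Int.lt_mul_add_iff_pos (by omega) hr₂' hsum]
  omega

/-- Correctness of the SCMP comparison test (π = 0):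
`r₁(x−y+1)+r₂ > N/2 ↔ x ≥ y`. -/
theorem scmp_test_pi0 (l σ : ℕ) (hl : 0 < l) (hσ : 0 < σ) (N x y r₁ r₂ : ℤ)
    (hN : 2 ^ (σ + l + 3) < N)
    (hx₁ : -2 ^ l ≤ x) (hx₂ : x ≤ 2 ^ l) (hy₁ : -2 ^ l ≤ y) (hy₂ : y ≤ 2 ^ l)
    (hr₁ : 1 ≤ r₁) (hr₁' : r₁ < 2 ^ σ)
    (hr₂ : 0 ≤ r₂) (hr₂' : r₂ ≤ N / 2) (hsum : N / 2 < r₁ + r₂) :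
    N / 2 < r₁ * (x - y + 1) + r₂ ↔ y ≤ x :=
  scmp_test_pi0_general N x y r₁ r₂ hr₁ hr₂' hsum
end

section
/- Let l, σ, N be as above (N > 2^{σ+l+3}), x, y ∈ [−2^l, 2^l] integers, r₁ ∈ [1, 2^σ), r₂ ≤ N/2, r₁ + r₂ > N/2. Then 0 < r₁·(y − x) + r₂ < N, and r₁·(y − x) + r₂ ≤ N/2 if and only if x ≥ y. -/
/-!
The masked difference `A = r₁ (y - x)` has `|A| ≤ 2^(σ+l+1)`, at most a quarter of `N`, and the
blinding `r₂` sits just below `N/2` with `r₁ + r₂` just above it. Hence `A + r₂` stays inside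
`(0, N)`, is at most `N/2` when `A ≤ 0`, and exceeds `N/2` when `A > 0`, because then `A ≥ r₁`.
-/

theorem abs_sub_le_two_pow_succ {α : Type*} [Ring α] [LinearOrder α] [IsOrderedRing α]
    {x y : α} {l : ℕ} (hx : |x| ≤ 2 ^ l) (hy : |y| ≤ 2 ^ l) : |y - x| ≤ 2 ^ (l + 1) :=
  calc |y - x| ≤ |y| + |x| := abs_sub y x
    _ ≤ 2 ^ l + 2 ^ l := add_le_add hy hx
    _ = 2 ^ (l + 1) := by rw [pow_succ, mul_two]

theorem abs_mul_sub_le_two_pow {α : Type*} [Ring α] [LinearOrder α] [IsOrderedRing α]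
    {r x y : α} {σ l : ℕ} (hr : |r| ≤ 2 ^ σ) (hx : |x| ≤ 2 ^ l) (hy : |y| ≤ 2 ^ l) :
    |r * (y - x)| ≤ 2 ^ (σ + l + 1) :=
  calc |r * (y - x)| = |r| * |y - x| := abs_mul r (y - x)
    _ ≤ 2 ^ σ * 2 ^ (l + 1) :=
      mul_le_mul hr (abs_sub_le_two_pow_succ hx hy) (abs_nonneg _) ((abs_nonneg r).trans hr)
    _ = 2 ^ (σ + l + 1) := by rw [← pow_add, add_assoc]

theorem decrypt_window {A B N r₁ r₂ : ℤ} (hA : |A| ≤ B) (hN : 4 * B < N) (hr₁ : r₁ ≤ B)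
    (hr₂ : r₂ ≤ N / 2) (hsum : N / 2 < r₁ + r₂) (hA_pos : 0 < A → r₁ ≤ A) :
    (0 < A + r₂ ∧ A + r₂ < N) ∧ (A + r₂ ≤ N / 2 ↔ A ≤ 0) := by
  rw [abs_le] at hA
  omega

theorem scmp_test_pi1_general (l σ : ℕ) (N x y r₁ r₂ : ℤ)
    (hN : 2 ^ (σ + l + 3) < N)
    (hx₁ : -2 ^ l ≤ x) (hx₂ : x ≤ 2 ^ l) (hy₁ : -2 ^ l ≤ y) (hy₂ : y ≤ 2 ^ l)
    (hr₁ : 1 ≤ r₁) (hr₁' : r₁ < 2 ^ σ)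
    (hr₂' : r₂ ≤ N / 2) (hsum : N / 2 < r₁ + r₂) :
    (0 < r₁ * (y - x) + r₂ ∧ r₁ * (y - x) + r₂ < N) ∧
      (r₁ * (y - x) + r₂ ≤ N / 2 ↔ y ≤ x) := by
  have hr₁_pos : 0 < r₁ := hr₁
  have hbound : |r₁ * (y - x)| ≤ 2 ^ (σ + l + 1) :=
    abs_mul_sub_le_two_pow (abs_le.mpr ⟨by linarith, hr₁'.le⟩) (abs_le.mpr ⟨hx₁, hx₂⟩)
      (abs_le.mpr ⟨hy₁, hy₂⟩)
  have hN' : 4 * 2 ^ (σ + l + 1) < N := by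
    calc (4 : ℤ) * 2 ^ (σ + l + 1) = 2 ^ (σ + l + 3) := by ring
      _ < N := hN
  have hr₁_le : r₁ ≤ 2 ^ (σ + l + 1) :=
    hr₁'.le.trans (pow_le_pow_right₀ one_le_two (by omega))
  have hA_pos : 0 < r₁ * (y - x) → r₁ ≤ r₁ * (y - x) := fun h =>
    le_mul_of_one_le_right hr₁_pos.le (pos_of_mul_pos_right h hr₁_pos.le)
  have hsign : r₁ * (y - x) ≤ 0 ↔ y ≤ x := by
    rw [← neg_nonneg, ← mul_neg, neg_sub, mul_nonneg_iff_of_pos_left hr₁_pos, sub_nonneg]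
  rw [← hsign]
  exact decrypt_window hbound hN' hr₁_le hr₂' hsum hA_pos

/-- Correctness of the SCMP comparison test (π = 1): `r₁(y−x)+r₂ ∈ (0, N)` and
`r₁(y−x)+r₂ ≤ N/2 ↔ x ≥ y`. -/
theorem scmp_test_pi1 (l σ : ℕ) (hl : 0 < l) (hσ : 0 < σ) (N x y r₁ r₂ : ℤ)
    (hN : 2 ^ (σ + l + 3) < N)
    (hx₁ : -2 ^ l ≤ x) (hx₂ : x ≤ 2 ^ l) (hy₁ : -2 ^ l ≤ y) (hy₂ : y ≤ 2 ^ l)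
    (hr₁ : 1 ≤ r₁) (hr₁' : r₁ < 2 ^ σ)
    (hr₂ : 0 ≤ r₂) (hr₂' : r₂ ≤ N / 2) (hsum : N / 2 < r₁ + r₂) :
    (0 < r₁ * (y - x) + r₂ ∧ r₁ * (y - x) + r₂ < N) ∧
      (r₁ * (y - x) + r₂ ≤ N / 2 ↔ y ≤ x) :=
  scmp_test_pi1_general l σ N x y r₁ r₂ hN hx₁ hx₂ hy₁ hy₂ hr₁ hr₁' hr₂' hsum
end

section
/- Let N > 1 be odd with gcd(2α, N) = 1 and let c satisfy c^{2α} ≡ (1+N)^{2α·m} (mod N²) with 0 ≤ m < N. Then ((c^{2α} mod N²) − 1)/N · ((2α)⁻¹ mod N) ≡ m (mod N). -/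
/-! Binomial expansion gives `(1 + N)^k ≡ 1 + kN (mod N²)`, so `c^{2α} mod N²` equals `1 + 2αm·N`
modulo `N²`, and Paillier's `L` function returns `2αm` modulo `N`. Multiplying by the inverse `b`
of `2α` modulo `N` recovers `m`, which is already reduced since `m < N`. -/

theorem Int.one_add_pow_modEq_one_add_mul (x : ℤ) (k : ℕ) :
    (1 + x) ^ k ≡ 1 + k * x [ZMOD x ^ 2] := by
  have h := sq_dvd_add_pow_sub_sub x 1 k
  simp only [one_pow, one_mul] at h
  refine (Int.modEq_iff_dvd.mpr ?_).symm
  rwa [show (1 + x) ^ k - (1 + k * x) = (1 + x) ^ k - x * k - 1 by ring]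

theorem Int.ediv_sub_one_modEq_of_modEq_one_add_mul {r k n : ℤ} (hn : n ≠ 0)
    (h : r ≡ 1 + k * n [ZMOD n ^ 2]) : (r - 1) / n ≡ k [ZMOD n] := by
  obtain ⟨q, hq⟩ := Int.modEq_iff_dvd.mp h.symm
  have hr : r - 1 = (k + n * q) * n := by linear_combination hq
  rw [hr, Int.mul_ediv_cancel _ hn]
  exact (Int.modEq_iff_dvd.mpr ⟨q, by ring⟩).symm

theorem fastPai_Dec_correct_general (N α m b : ℕ) (c : ℤ)
    (hm : m < N)
    (hc : c ^ (2 * α) ≡ (1 + (N : ℤ)) ^ (2 * α * m) [ZMOD (N : ℤ) ^ 2])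
    (hb : (2 * α * b) % N = 1 % N) :
    ((c ^ (2 * α) % (N : ℤ) ^ 2 - 1) / (N : ℤ) * (b : ℤ)) % (N : ℤ) = (m : ℤ) := by
  have hN : (N : ℤ) ≠ 0 := by omega
  have hL : (c ^ (2 * α) % (N : ℤ) ^ 2 - 1) / N ≡ (2 * α * m : ℕ) [ZMOD N] :=
    Int.ediv_sub_one_modEq_of_modEq_one_add_mul hN <|
      ((Int.mod_modEq _ _).trans hc).trans (Int.one_add_pow_modEq_one_add_mul _ _)
  have hb' : ((2 * α * b : ℕ) : ℤ) ≡ 1 [ZMOD N] := by exact_mod_cast hb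
  have hdec : (c ^ (2 * α) % (N : ℤ) ^ 2 - 1) / N * b ≡ m [ZMOD N] :=
    calc _ ≡ (2 * α * m : ℕ) * b [ZMOD N] := hL.mul_right _
      _ = m * (2 * α * b : ℕ) := by push_cast; ring
      _ ≡ m * 1 [ZMOD N] := hb'.mul_left _
      _ = m := mul_one _
  exact hdec.eq.trans (Int.emod_eq_of_lt (by positivity) (by exact_mod_cast hm))

/-- Correctness of basic FastPai decryption:
`Dec(sk, c) = L(c^{2α} mod N²)·((2α)⁻¹ mod N) mod N = m`, where `L(u) = (u−1)/N`. -/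
theorem fastPai_Dec_correct (N α m b : ℕ) (c : ℤ)
    (hN : 1 < N) (hNodd : Odd N) (hα : 0 < α) (hgcd : Nat.gcd (2 * α) N = 1)
    (hm : m < N)
    (hc : c ^ (2 * α) ≡ (1 + (N : ℤ)) ^ (2 * α * m) [ZMOD (N : ℤ) ^ 2])
    (hbN : b < N) (hb : (2 * α * b) % N = 1 % N) :
    ((c ^ (2 * α) % (N : ℤ) ^ 2 - 1) / (N : ℤ) * (b : ℤ)) % (N : ℤ) = (m : ℤ) :=
  fastPai_Dec_correct_general N α m b c hm hc hb
end

section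
/- The two forms of FastPai encryption agree: for any m, r ≥ 0 and N > 1, (1+N)^m · (h^r mod N)^N ≡ (1 + m·N) · ((h^N mod N²))^r (mod N²). -/
/-! Both sides are congruent to `(1 + m N) h^{rN}` modulo `N²`: the binomial theorem gives
`(1 + N)^m ≡ 1 + m N`, and reducing `h^r` modulo `N` is harmless under the `N`-th power because
`x^N - y^N = (x - y) ∑ xⁱ y^{N-1-i}` with both factors divisible by `N` when `x ≡ y (mod N)`. -/

namespace Int

theorem one_add_pow_modEq_sq (a : ℤ) (m : ℕ) : (1 + a) ^ m ≡ 1 + m * a [ZMOD a ^ 2] := by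
  have h := sq_dvd_add_pow_sub_sub a 1 m
  rw [one_pow, one_pow, one_mul, sub_sub, mul_comm a, add_comm _ 1] at h
  exact (modEq_iff_dvd.mpr h).symm

theorem pow_modEq_sq_of_modEq {N : ℕ} {x y : ℤ} (hxy : x ≡ y [ZMOD N]) :
    x ^ N ≡ y ^ N [ZMOD (N : ℤ) ^ 2] := by
  have h := dvd_sub_pow_of_dvd_sub (ModEq.dvd hxy.symm) 1
  rw [pow_one] at h
  exact (modEq_iff_dvd.mpr h).symm

end Int

theorem fastPai_enc_forms_agree_general (N m r : ℕ) (h : ℤ) :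
    (1 + (N : ℤ)) ^ m * (h ^ r % (N : ℤ)) ^ N
      ≡ (1 + (m : ℤ) * N) * (h ^ N % (N : ℤ) ^ 2) ^ r [ZMOD (N : ℤ) ^ 2] := by
  have hleft : (h ^ r % (N : ℤ)) ^ N ≡ (h ^ r) ^ N [ZMOD (N : ℤ) ^ 2] :=
    Int.pow_modEq_sq_of_modEq (Int.mod_modEq _ _)
  have hright : (h ^ N % (N : ℤ) ^ 2) ^ r ≡ (h ^ N) ^ r [ZMOD (N : ℤ) ^ 2] :=
    (Int.mod_modEq _ _).pow r
  calc (1 + (N : ℤ)) ^ m * (h ^ r % (N : ℤ)) ^ N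
      ≡ (1 + (m : ℤ) * N) * (h ^ r) ^ N [ZMOD (N : ℤ) ^ 2] :=
        (Int.one_add_pow_modEq_sq N m).mul hleft
    _ = (1 + (m : ℤ) * N) * (h ^ N) ^ r := by rw [← pow_mul, ← pow_mul, mul_comm r]
    _ ≡ (1 + (m : ℤ) * N) * (h ^ N % (N : ℤ) ^ 2) ^ r [ZMOD (N : ℤ) ^ 2] :=
        hright.symm.mul_left _

/-- The two forms of FastPai encryption agree modulo `N²`:
`(1+N)^m · (h^r mod N)^N ≡ (1 + m·N) · (h^N mod N²)^r (mod N²)`. -/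
theorem fastPai_enc_forms_agree (N m r : ℕ) (h : ℤ) (hN : 1 < N) :
    (1 + (N : ℤ)) ^ m * (h ^ r % (N : ℤ)) ^ N
      ≡ (1 + (m : ℤ) * N) * (h ^ N % (N : ℤ) ^ 2) ^ r [ZMOD (N : ℤ) ^ 2] :=
  fastPai_enc_forms_agree_general N m r h
end
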